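/- Cauchy property of the truncated move functionals: let d−1 < s < d, Δ ⊂ ℝ^d bounded with ρ = sup_{x∈Δ}‖x‖, η a finite configuration in Δ, and γ a locally finite configuration in ℝ^d. Define M^{(p)} = Σ_{x∈η} Σ_{y∈γ∩(Λ_p\Δ)} [g(x−y) − g(y)] where Λ_p is the centered box of volume p. Then for p large enough (so that ρ ≤ p^{1/d}/4) and all q > p, |M^{(q)} − M^{(p)}| ≤ s·4^{s+1}·ρ·|η| · Σ_{k=p}^{∞} N_k(γ) k^{−(s+1)/d}, where N_k(γ) = |γ ∩ (Λ_{k+1}\Λ_k)|. -/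

import Mathlib

/-!
The difference `M q - M p` only involves points `y` of `γ` in the shells `Λ (k+1) \ Λ k` with
`p ≤ k < q`. Such a `y` has a coordinate beyond `k^(1/d)/2`, so `‖y‖ ≥ k^(1/d)/2 ≥ 2ρ`, and both
`‖y‖` and `‖x - y‖` are at least `k^(1/d)/4` for `x ∈ η`. The mean value theorem for `t ↦ t^(-s)`
on `[k^(1/d)/4, ∞)` then bounds each term `g(x - y) - g(y)` by `s 4^(s+1) ρ k^(-(s+1)/d)`.
-/

open ENNReal Finset Function

theorem abs_rpow_neg_sub_rpow_neg_le {s c a b : ℝ} (hs : 0 ≤ s) (hc : 0 < c)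
    (ha : c ≤ a) (hb : c ≤ b) :
    |a ^ (-s) - b ^ (-s)| ≤ s * c ^ (-(s + 1)) * |a - b| := by
  have hderiv : ∀ t ∈ Set.Ici c, HasDerivWithinAt (fun t : ℝ => t ^ (-s))
      (-s * t ^ (-s - 1)) (Set.Ici c) t := fun t ht =>
    (Real.hasDerivAt_rpow_const (Or.inl (hc.trans_le ht).ne')).hasDerivWithinAt
  have hbound : ∀ t ∈ Set.Ici c, ‖-s * t ^ (-s - 1)‖ ≤ s * c ^ (-(s + 1)) := by
    intro t ht
    have ht0 : 0 < t := hc.trans_le ht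
    rw [Real.norm_eq_abs, abs_mul, abs_neg, abs_of_nonneg hs,
      abs_of_pos (Real.rpow_pos_of_pos ht0 _), neg_add']
    exact mul_le_mul_of_nonneg_left (Real.rpow_le_rpow_of_nonpos hc ht (by linarith)) hs
  simpa only [Real.norm_eq_abs] using
    (convex_Ici c).norm_image_sub_le_of_norm_hasDerivWithin_le hderiv hbound hb ha

theorem abs_norm_sub_rpow_neg_sub_norm_rpow_neg_le {E : Type*} [SeminormedAddCommGroup E]
    {s r ρ : ℝ} {x y : E} (hs : 0 ≤ s) (hr : 0 < r) (hy : r / 2 ≤ ‖y‖) (hx : ‖x‖ ≤ ρ)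
    (hρ : ρ ≤ r / 4) :
    |‖x - y‖ ^ (-s) - ‖y‖ ^ (-s)| ≤ s * 4 ^ (s + 1) * ρ * r ^ (-(s + 1)) := by
  have hxy : r / 4 ≤ ‖x - y‖ := by
    have := norm_sub_norm_le y x
    rw [norm_sub_rev y x] at this
    linarith
  have hdist : |‖x - y‖ - ‖y‖| ≤ ‖x‖ := by
    simpa using abs_norm_sub_norm_le (x - y) (-y)
  have hquarter : (r / 4) ^ (-(s + 1)) = 4 ^ (s + 1) * r ^ (-(s + 1)) := by
    rw [Real.div_rpow hr.le (by norm_num), Real.rpow_neg (by norm_num : (0 : ℝ) ≤ 4),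
      div_inv_eq_mul, mul_comm]
  calc |‖x - y‖ ^ (-s) - ‖y‖ ^ (-s)|
      ≤ s * (r / 4) ^ (-(s + 1)) * |‖x - y‖ - ‖y‖| :=
        abs_rpow_neg_sub_rpow_neg_le hs (by positivity) hxy (by linarith)
    _ ≤ s * (r / 4) ^ (-(s + 1)) * ρ := by gcongr; exact hdist.trans hx
    _ = s * 4 ^ (s + 1) * ρ * r ^ (-(s + 1)) := by rw [hquarter]; ring

def centeredBox (d p : ℕ) : Set (EuclideanSpace ℝ (Fin d)) :=
  {x | ∀ i, |x i| ≤ (p : ℝ) ^ (1 / (d : ℝ)) / 2}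

theorem monotone_centeredBox (d : ℕ) : Monotone (centeredBox d) := by
  intro a b hab x hx i
  have : (a : ℝ) ^ (1 / (d : ℝ)) ≤ (b : ℝ) ^ (1 / (d : ℝ)) := by gcongr
  linarith [hx i]

theorem le_norm_of_notMem_centeredBox {d k : ℕ} {y : EuclideanSpace ℝ (Fin d)}
    (hy : y ∉ centeredBox d k) : (k : ℝ) ^ (1 / (d : ℝ)) / 2 ≤ ‖y‖ := by
  obtain ⟨i, hi⟩ : ∃ i, (k : ℝ) ^ (1 / (d : ℝ)) / 2 < |y i| := by
    simpa [centeredBox] using hy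
  exact hi.le.trans (PiLp.norm_apply_le y i)

theorem abs_norm_sub_rpow_neg_sub_le_of_notMem_centeredBox {d k : ℕ} {s ρ : ℝ}
    {x y : EuclideanSpace ℝ (Fin d)} (hs : 0 ≤ s) (hk : 0 < k) (hy : y ∉ centeredBox d k)
    (hx : ‖x‖ ≤ ρ) (hρ : ρ ≤ (k : ℝ) ^ (1 / (d : ℝ)) / 4) :
    |‖x - y‖ ^ (-s) - ‖y‖ ^ (-s)| ≤ s * 4 ^ (s + 1) * ρ * (k : ℝ) ^ (-(s + 1) / (d : ℝ)) := by
  have hk0 : (0 : ℝ) < k := by exact_mod_cast hk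
  rw [show -(s + 1) / (d : ℝ) = 1 / d * -(s + 1) by ring, Real.rpow_mul hk0.le]
  exact abs_norm_sub_rpow_neg_sub_norm_rpow_neg_le hs (by positivity)
    (le_norm_of_notMem_centeredBox hy) hx hρ

theorem exists_mem_Ico_mem_succ_sdiff {α : Type*} {A : ℕ → Set α} (hA : Monotone A)
    {p q : ℕ} {y : α} (hq : y ∈ A q) (hp : y ∉ A p) :
    ∃ k ∈ Finset.Ico p q, y ∈ A (k + 1) \ A k := by
  induction q with
  | zero => exact absurd (hA (Nat.zero_le p) hq) hp
  | succ q ih =>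
    by_cases hyq : y ∈ A q
    · obtain ⟨k, hk, hyk⟩ := ih hyq
      exact ⟨k, Finset.Ico_subset_Ico_right q.le_succ hk, hyk⟩
    · have hpq : p ≤ q := by
        by_contra! h
        exact hp (hA h hq)
      exact ⟨q, Finset.mem_Ico.mpr ⟨hpq, q.lt_succ_self⟩, hq, hyq⟩

theorem sdiff_subset_biUnion_shells {α : Type*} [DecidableEq α] {A : ℕ → Set α}
    (hA : Monotone A) {γ Δ : Set α} {F G : ℕ → Finset α}
    (hF : ∀ p, ↑(F p) = γ ∩ (A p \ Δ)) (hG : ∀ k, ↑(G k) = γ ∩ (A (k + 1) \ A k)) (p q : ℕ) :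
    F q \ F p ⊆ (Ico p q).biUnion G := by
  intro y hy
  rw [mem_sdiff, ← mem_coe, ← mem_coe, hF, hF] at hy
  obtain ⟨⟨hyγ, hyq, hyΔ⟩, hyp⟩ := hy
  obtain ⟨k, hk, hyk⟩ := exists_mem_Ico_mem_succ_sdiff hA hyq fun h => hyp ⟨hyγ, h, hyΔ⟩
  exact mem_biUnion.mpr ⟨k, hk, by rw [← mem_coe, hG]; exact ⟨hyγ, hyk⟩⟩

theorem pairwise_disjoint_shells {α : Type*} {A : ℕ → Set α} (hA : Monotone A)
    {γ : Set α} {G : ℕ → Finset α} (hG : ∀ k, ↑(G k) = γ ∩ (A (k + 1) \ A k)) :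
    Pairwise (Disjoint on G) := by
  refine (pairwise_disjoint_on G).mpr fun a b hab => ?_
  rw [← disjoint_coe, hG, hG, Set.disjoint_left]
  rintro z ⟨-, hza, -⟩ ⟨-, -, hzb⟩
  exact hzb (hA hab hza)

theorem abs_sum_sum_sub_sum_sum_le {ι κ : Type*} [DecidableEq κ] (η : Finset ι)
    {A B : Finset κ} (hAB : A ⊆ B) {G : ℕ → Finset κ} (hG : Pairwise (Disjoint on G))
    {I : Finset ℕ} (hcover : B \ A ⊆ I.biUnion G) (f : ι → κ → ℝ) (b : ℕ → ℝ)
    (hf : ∀ x ∈ η, ∀ k ∈ I, ∀ y ∈ G k, |f x y| ≤ b k) :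
    |∑ x ∈ η, ∑ y ∈ B, f x y - ∑ x ∈ η, ∑ y ∈ A, f x y| ≤
      #η * ∑ k ∈ I, #(G k) * b k := by
  have hinner : ∀ x ∈ η, ∑ y ∈ B \ A, |f x y| ≤ ∑ k ∈ I, #(G k) * b k := by
    intro x hx
    calc ∑ y ∈ B \ A, |f x y| ≤ ∑ y ∈ I.biUnion G, |f x y| :=
          sum_le_sum_of_subset_of_nonneg hcover fun _ _ _ => abs_nonneg _
      _ = ∑ k ∈ I, ∑ y ∈ G k, |f x y| := sum_biUnion (hG.set_pairwise _)
      _ ≤ ∑ k ∈ I, #(G k) * b k := by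
          refine sum_le_sum fun k hk => ?_
          simpa only [nsmul_eq_mul] using sum_le_card_nsmul _ _ _ fun y hy => hf x hx k hk y hy
  have hsplit : ∑ x ∈ η, ∑ y ∈ B, f x y - ∑ x ∈ η, ∑ y ∈ A, f x y =
      ∑ x ∈ η, ∑ y ∈ B \ A, f x y := by
    rw [← sum_sub_distrib]
    exact sum_congr rfl fun x _ => by rw [← sum_sdiff hAB, add_sub_cancel_right]
  calc |∑ x ∈ η, ∑ y ∈ B, f x y - ∑ x ∈ η, ∑ y ∈ A, f x y|
      ≤ ∑ x ∈ η, ∑ y ∈ B \ A, |f x y| := by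
        rw [hsplit]
        exact (abs_sum_le_sum_abs _ _).trans (sum_le_sum fun x _ => abs_sum_le_sum_abs _ _)
    _ ≤ #η * ∑ k ∈ I, #(G k) * b k := by
        simpa only [nsmul_eq_mul] using sum_le_card_nsmul _ _ _ hinner

theorem ofReal_sum_Ico_le_tsum_ite (n : ℕ → ℕ) (a : ℕ → ℝ) (ha : ∀ k, 0 ≤ a k) (p q : ℕ) :
    ENNReal.ofReal (∑ k ∈ Ico p q, n k * a k) ≤
      ∑' k, if p ≤ k then (n k : ℝ≥0∞) * ENNReal.ofReal (a k) else 0 := by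
  rw [ENNReal.ofReal_sum_of_nonneg fun k _ => mul_nonneg (Nat.cast_nonneg _) (ha k)]
  refine le_of_eq_of_le (sum_congr rfl fun k hk => ?_) (ENNReal.sum_le_tsum _)
  rw [if_pos (mem_Ico.mp hk).1, ENNReal.ofReal_mul (Nat.cast_nonneg _), ENNReal.ofReal_natCast]

theorem move_functional_cauchy_general (d : ℕ) (hd : 1 ≤ d) (s : ℝ)
    (hs1 : (d : ℝ) - 1 < s)
    (Λ : ℕ → Set (EuclideanSpace ℝ (Fin d)))
    (hΛ : ∀ p : ℕ, Λ p = {x : EuclideanSpace ℝ (Fin d) |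
      ∀ i, |x i| ≤ (p : ℝ) ^ (1 / (d : ℝ)) / 2})
    (Δ : Set (EuclideanSpace ℝ (Fin d))) (ρ : ℝ)
    (hρ : IsLUB ((fun x => ‖x‖) '' Δ) ρ)
    (η : Finset (EuclideanSpace ℝ (Fin d))) (hη : ↑η ⊆ Δ)
    (γ : Set (EuclideanSpace ℝ (Fin d)))
    (F : ℕ → Finset (EuclideanSpace ℝ (Fin d)))
    (hF : ∀ p : ℕ, ↑(F p) = γ ∩ (Λ p \ Δ))
    (G : ℕ → Finset (EuclideanSpace ℝ (Fin d)))
    (hG : ∀ k : ℕ, ↑(G k) = γ ∩ (Λ (k + 1) \ Λ k))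
    (p : ℕ) (hp : 1 ≤ p) (hpρ : ρ ≤ (p : ℝ) ^ (1 / (d : ℝ)) / 4)
    (q : ℕ) (hq : p < q) :
    ENNReal.ofReal
        |(∑ x ∈ η, ∑ y ∈ F q, (‖x - y‖ ^ (-s) - ‖y‖ ^ (-s))) -
          (∑ x ∈ η, ∑ y ∈ F p, (‖x - y‖ ^ (-s) - ‖y‖ ^ (-s)))| ≤
      ENNReal.ofReal (s * 4 ^ (s + 1) * ρ * (η.card : ℝ)) *
        ∑' k : ℕ, (if p ≤ k then
          ((G k).card : ℝ≥0∞) * ENNReal.ofReal ((k : ℝ) ^ (-(s + 1) / (d : ℝ)))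
          else 0) := by
  classical
  obtain rfl : Λ = centeredBox d := funext hΛ
  have hs : 0 ≤ s := by
    have : (1 : ℝ) ≤ d := by exact_mod_cast hd
    linarith
  have hmono := monotone_centeredBox d
  have hFpq : F p ⊆ F q := by
    rw [← coe_subset, hF, hF]
    exact Set.inter_subset_inter_right _ (Set.sdiff_subset_sdiff_left (hmono hq.le))
  have hshell : ∀ x ∈ η, ∀ k ∈ Ico p q, ∀ y ∈ G k, |‖x - y‖ ^ (-s) - ‖y‖ ^ (-s)| ≤
      s * 4 ^ (s + 1) * ρ * (k : ℝ) ^ (-(s + 1) / (d : ℝ)) := by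
    intro x hx k hk y hy
    have hpk : p ≤ k := (mem_Ico.mp hk).1
    have hyk : y ∉ centeredBox d k := by
      rw [← mem_coe, hG] at hy
      exact hy.2.2
    have hpk' : (p : ℝ) ^ (1 / (d : ℝ)) ≤ (k : ℝ) ^ (1 / (d : ℝ)) := by gcongr
    exact abs_norm_sub_rpow_neg_sub_le_of_notMem_centeredBox hs (hp.trans hpk) hyk
      (hρ.1 ⟨x, hη hx, rfl⟩) (by linarith)
  calc _ ≤ ENNReal.ofReal (#η * ∑ k ∈ Ico p q,
          #(G k) * (s * 4 ^ (s + 1) * ρ * (k : ℝ) ^ (-(s + 1) / (d : ℝ)))) :=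
        ENNReal.ofReal_le_ofReal <| abs_sum_sum_sub_sum_sum_le η hFpq
          (pairwise_disjoint_shells hmono hG) (sdiff_subset_biUnion_shells hmono hF hG p q)
          _ _ hshell
    _ = ENNReal.ofReal (s * 4 ^ (s + 1) * ρ * #η) *
          ENNReal.ofReal (∑ k ∈ Ico p q, #(G k) * (k : ℝ) ^ (-(s + 1) / (d : ℝ))) := by
        rw [← ENNReal.ofReal_mul' (sum_nonneg fun k _ => by positivity), mul_sum, mul_sum]
        exact congrArg _ (sum_congr rfl fun k _ => by ring)
    _ ≤ _ := mul_le_mul_right (ofReal_sum_Ico_le_tsum_ite _ _ (fun k => by positivity) p q) _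

/-- Cauchy property of the truncated move functionals: with `g(x) = ‖x‖^(-s)`,
`d-1 < s < d`, `Λ_p` the centered box of volume `p`, `η` a finite configuration
in `Δ` (with `ρ = sup_{x∈Δ} ‖x‖`), and `γ` a locally finite configuration whose
trace on `Λ_p \ Δ` is the finite set `F p` and on the shell `Λ_{k+1} \ Λ_k` the
finite set `G k`, the truncations
`M p = ∑_{x∈η} ∑_{y∈F p} (g(x-y) - g(y))` satisfy, for `p` with
`ρ ≤ p^(1/d)/4` and `q > p`,
`|M q - M p| ≤ s 4^(s+1) ρ |η| ∑_{k≥p} N_k(γ) k^(-(s+1)/d)` where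
`N_k(γ) = |G k|`. -/
theorem move_functional_cauchy (d : ℕ) (hd : 1 ≤ d) (s : ℝ)
    (hs1 : (d : ℝ) - 1 < s) (hs2 : s < d)
    (Λ : ℕ → Set (EuclideanSpace ℝ (Fin d)))
    (hΛ : ∀ p : ℕ, Λ p = {x : EuclideanSpace ℝ (Fin d) |
      ∀ i, |x i| ≤ (p : ℝ) ^ (1 / (d : ℝ)) / 2})
    (Δ : Set (EuclideanSpace ℝ (Fin d))) (ρ : ℝ)
    (hρ : IsLUB ((fun x => ‖x‖) '' Δ) ρ)
    (η : Finset (EuclideanSpace ℝ (Fin d))) (hη : ↑η ⊆ Δ)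
    (γ : Set (EuclideanSpace ℝ (Fin d)))
    (F : ℕ → Finset (EuclideanSpace ℝ (Fin d)))
    (hF : ∀ p : ℕ, ↑(F p) = γ ∩ (Λ p \ Δ))
    (G : ℕ → Finset (EuclideanSpace ℝ (Fin d)))
    (hG : ∀ k : ℕ, ↑(G k) = γ ∩ (Λ (k + 1) \ Λ k))
    (p : ℕ) (hp : 1 ≤ p) (hpρ : ρ ≤ (p : ℝ) ^ (1 / (d : ℝ)) / 4)
    (q : ℕ) (hq : p < q) :
    ENNReal.ofReal
        |(∑ x ∈ η, ∑ y ∈ F q, (‖x - y‖ ^ (-s) - ‖y‖ ^ (-s))) -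
          (∑ x ∈ η, ∑ y ∈ F p, (‖x - y‖ ^ (-s) - ‖y‖ ^ (-s)))| ≤
      ENNReal.ofReal (s * 4 ^ (s + 1) * ρ * (η.card : ℝ)) *
        ∑' k : ℕ, (if p ≤ k then
          ((G k).card : ℝ≥0∞) * ENNReal.ofReal ((k : ℝ) ^ (-(s + 1) / (d : ℝ)))
          else 0) :=
  move_functional_cauchy_general d hd s hs1 Λ hΛ Δ ρ hρ η hη γ F hF G hG p hp hpρ q hq
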